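/- Let C = {h : Z_2^γ̇ × Z_4^δ → Z_2 | h = φ⁺ ∘ f for some affine f : Z_2^γ̇ × Z_4^δ → Z_4 with f(0) ∈ {0,2}}, viewed as a binary code of length n = 2^{γ̇+2δ}. Then |C| = 2n and the minimum Hamming distance of C is n/2. -/

import Mathlib

/-!
An affine `f : G → ℤ₄` is `f 0 + a` with `a : G →+ ℤ₄`, so the `f` with `f 0 ∈ {0, 2}` number
`2 * |Hom(G, ℤ₄)| = 2 * 2^γ * 4^δ = 2n`.

For two of them, `f = f 0 + a` and `g = g 0 + b`, the key identity is `φ⁺ (z + 2) = φ⁺ z + 1`.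
If `a ≠ b`, then `a - b` takes the value `2` at some `u` (at `2w` if `a w - b w` is odd, and then
`a u` is even; otherwise `f - g` is even everywhere). Translating by `u` then exchanges the points
where `φ⁺ ∘ f` and `φ⁺ ∘ g` agree with those where they differ, so their distance is `n / 2`.
If `a = b`, then `g = f` or `g = f + 2`, at distance `0` or `n`. In particular `f ↦ φ⁺ ∘ f` is
injective, so `|C| = 2n`.
-/

def IsAffine {G : Type*} [AddCommGroup G] (f : G → ZMod 4) : Prop :=
  ∀ x y : G, f 0 - f x - f y + f (x + y) = 0

def phiPlus (a : ZMod 4) : ZMod 2 := if a = 1 ∨ a = 2 then 1 else 0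

open Finset

theorem hammingDist_eq_sum_ite {ι β : Type*} [Fintype ι] [DecidableEq β] (x y : ι → β) :
    hammingDist x y = ∑ i, if x i ≠ y i then 1 else 0 :=
  card_filter _ _

theorem two_mul_card_filter_eq_card_of_equiv {α : Type*} [Fintype α] (p : α → Prop)
    [DecidablePred p] (e : α ≃ α) (he : ∀ a, p (e a) ↔ ¬p a) :
    2 * #{a | p a} = Fintype.card α := by
  have hswap : #{a | ¬p a} = #{a | p a} := by
    rw [card_filter, card_filter, ← e.sum_comp]
    simp only [he, not_not]
  rw [two_mul]
  nth_rewrite 2 [← hswap]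
  exact card_filter_add_card_filter_not _

theorem two_mul_hammingDist_eq_card_of_add_right {G β : Type*} [AddGroup G] [Fintype G]
    [DecidableEq β] {h₁ h₂ : G → β} (w : G) (hw : ∀ v, h₁ (v + w) ≠ h₂ (v + w) ↔ h₁ v = h₂ v) :
    2 * hammingDist h₁ h₂ = Fintype.card G :=
  two_mul_card_filter_eq_card_of_equiv _ (Equiv.addRight w) fun v => by simp [hw v]

namespace AddMonoidHom

theorem card_zmod_eq (n : ℕ) (A : Type*) [AddCommGroup A] :
    Nat.card (ZMod n →+ A) = Nat.card {a : A // n • a = 0} :=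
  Nat.card_congr <| (ZMod.lift n).symm.trans <|
    Equiv.subtypeEquiv (zmultiplesHom A).symm fun f => by
      simp [zmultiplesHom, ← map_nsmul]

theorem card_prod (A B M : Type*) [AddCommGroup A] [AddCommGroup B] [AddCommGroup M] :
    Nat.card (A × B →+ M) = Nat.card (A →+ M) * Nat.card (B →+ M) := by
  rw [← Nat.card_prod]
  exact Nat.card_congr ((addMonoidHomLequivInt ℤ).toEquiv.trans
    ((LinearMap.coprodEquiv ℕ).symm.toEquiv.trans
      ((addMonoidHomLequivInt ℤ).toEquiv.prodCongr (addMonoidHomLequivInt ℤ).toEquiv).symm))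

theorem card_pi (ι A M : Type*) [Finite ι] [AddCommGroup A] [AddCommGroup M] :
    Nat.card ((ι → A) →+ M) = Nat.card (A →+ M) ^ Nat.card ι := by
  classical
  have := Fintype.ofFinite ι
  rw [← Nat.card_fun]
  exact Nat.card_congr ((addMonoidHomLequivInt ℤ).toEquiv.trans
    ((LinearMap.lsum ℤ (fun _ : ι => A) ℕ).symm.toEquiv.trans
      (Equiv.piCongrRight fun _ => (addMonoidHomLequivInt ℤ).toEquiv.symm)))

end AddMonoidHom

theorem card_addMonoidHom_zmod_two_pi_prod_zmod_four_pi (γ δ : ℕ) :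
    Nat.card ((Fin γ → ZMod 2) × (Fin δ → ZMod 4) →+ ZMod 4) = 2 ^ (γ + 2 * δ) := by
  have h2 : Nat.card {a : ZMod 4 // 2 • a = 0} = 2 := by
    rw [Nat.card_eq_fintype_card]; decide
  have h4 : Nat.card {a : ZMod 4 // 4 • a = 0} = 2 ^ 2 := by
    rw [Nat.card_eq_fintype_card]; decide
  rw [AddMonoidHom.card_prod, AddMonoidHom.card_pi, AddMonoidHom.card_pi,
    AddMonoidHom.card_zmod_eq, AddMonoidHom.card_zmod_eq, h2, h4]
  simp only [Nat.card_eq_fintype_card, Fintype.card_fin, pow_add, pow_mul]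

namespace IsAffine

variable {G : Type*} [AddCommGroup G] {f : G → ZMod 4}

def linearPart (hf : IsAffine f) : G →+ ZMod 4 where
  toFun x := f x - f 0
  map_zero' := sub_self _
  map_add' x y := by linear_combination hf x y

theorem apply_eq (hf : IsAffine f) (x : G) : f x = f 0 + hf.linearPart x := by
  simp [linearPart]

theorem apply_add (hf : IsAffine f) (x y : G) : f (x + y) = f x + hf.linearPart y := by
  rw [hf.apply_eq, map_add, hf.apply_eq x]
  ring

end IsAffine

theorem isAffine_const_add {G : Type*} [AddCommGroup G] (c : ZMod 4) (φ : G →+ ZMod 4) :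
    IsAffine fun x => c + φ x := by
  intro x y
  simp only [map_zero, map_add]
  ring

theorem AddMonoidHom.isAffine {G : Type*} [AddCommGroup G] (φ : G →+ ZMod 4) : IsAffine φ := by
  simpa using isAffine_const_add 0 φ

def affineEquiv (G : Type*) [AddCommGroup G] (S : Set (ZMod 4)) :
    {f : G → ZMod 4 // IsAffine f ∧ f 0 ∈ S} ≃ S × (G →+ ZMod 4) where
  toFun f := (⟨f.1 0, f.2.2⟩, f.2.1.linearPart)
  invFun p := ⟨fun x => p.1 + p.2 x, isAffine_const_add _ _, by simp⟩
  left_inv f := Subtype.ext <| funext fun x => (f.2.1.apply_eq x).symm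
  right_inv p := by ext <;> simp [IsAffine.linearPart]

/-- `φ⁺ (z + 2) = φ⁺ z + 1`, and `φ⁺ (z + c) = φ⁺ z + φ⁺ c` for `c ∈ {0, 2}`. -/
theorem phiPlus_add_ne_phiPlus_add_two_iff (x y α : ZMod 4)
    (h : (α = 0 ∨ α = 2) ∨ (x - y = 0 ∨ x - y = 2)) :
    phiPlus (x + α) ≠ phiPlus (y + (α + 2)) ↔ phiPlus x = phiPlus y := by
  revert x y α
  decide

section AffineCode

variable {G : Type*} [AddCommGroup G] [Fintype G] {f g : G → ZMod 4}

theorem two_mul_hammingDist_phiPlus_eq_card (hf : IsAffine f) (hg : IsAffine g) {u : G}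
    (hu : hg.linearPart u = hf.linearPart u + 2)
    (hpar : (hf.linearPart u = 0 ∨ hf.linearPart u = 2) ∨ ∀ v, f v - g v = 0 ∨ f v - g v = 2) :
    2 * hammingDist (phiPlus ∘ f) (phiPlus ∘ g) = Fintype.card G := by
  refine two_mul_hammingDist_eq_card_of_add_right u fun v => ?_
  simp only [Function.comp_apply, hf.apply_add, hg.apply_add, hu]
  exact phiPlus_add_ne_phiPlus_add_two_iff _ _ _ (hpar.imp_right (· v))

theorem phiPlus_comp_trichotomy (hf : IsAffine f) (hg : IsAffine g)
    (hf0 : f 0 ∈ ({0, 2} : Set (ZMod 4))) (hg0 : g 0 ∈ ({0, 2} : Set (ZMod 4))) :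
    f = g ∨ (∀ v, phiPlus (f v) ≠ phiPlus (g v)) ∨
      2 * hammingDist (phiPlus ∘ f) (phiPlus ∘ g) = Fintype.card G := by
  simp only [Set.mem_insert_iff, Set.mem_singleton_iff] at hf0 hg0
  set a := hf.linearPart
  set b := hg.linearPart
  by_cases hodd : ∃ w, a w - b w = 1 ∨ a w - b w = 3
  · obtain ⟨w, hw⟩ := hodd
    refine Or.inr <| Or.inr <| two_mul_hammingDist_phiPlus_eq_card hf hg (u := w + w) ?_ ?_
    · rw [map_add, map_add]
      revert hw; generalize a w = s; generalize b w = t; revert s t; decide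
    · rw [map_add]
      left; generalize a w = s; revert s; decide
  push Not at hodd
  have heven : ∀ v, a v - b v = 0 ∨ a v - b v = 2 := fun v => by
    have := hodd v; generalize a v - b v = s at this ⊢; revert s; decide
  have hdiff : ∀ v, f v - g v = (f 0 - g 0) + (a v - b v) := fun v => by
    rw [hf.apply_eq v, hg.apply_eq v]; ring
  have hdiff0 : f 0 - g 0 = 0 ∨ f 0 - g 0 = 2 := by
    rcases hf0 with h | h <;> rcases hg0 with h' | h' <;> rw [h, h'] <;> decide
  by_cases htwo : ∃ w, a w - b w = 2
  · obtain ⟨w, hw⟩ := htwo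
    refine Or.inr <| Or.inr <| two_mul_hammingDist_phiPlus_eq_card hf hg (u := w) ?_ ?_
    · rw [show (2 : ZMod 4) = -2 by decide, ← hw]
      ring
    · right
      intro v
      rw [hdiff v]
      have := heven v
      generalize f 0 - g 0 = s at hdiff0
      generalize a v - b v = t at this
      revert s t
      decide
  push Not at htwo
  have hfg : ∀ v, f v = g v + (f 0 - g 0) := fun v => by
    have := (heven v).resolve_right (htwo v)
    linear_combination hdiff v + this
  rcases hdiff0 with h | h
  · exact Or.inl <| funext fun v => by rw [hfg v, h, add_zero]
  · refine Or.inr <| Or.inl fun v => ?_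
    rw [hfg v, h]
    generalize g v = s
    revert s
    decide

theorem phiPlus_comp_injective :
    Function.Injective fun f : {f : G → ZMod 4 // IsAffine f ∧ f 0 ∈ ({0, 2} : Set (ZMod 4))} =>
      phiPlus ∘ f.1 := by
  rintro ⟨f, hf, hf0⟩ ⟨g, hg, hg0⟩ (h : phiPlus ∘ f = phiPlus ∘ g)
  rcases phiPlus_comp_trichotomy hf hg hf0 hg0 with hfg | hall | hdist
  · exact Subtype.ext hfg
  · exact absurd (congrFun h 0) (hall 0)
  · rw [h, hammingDist_self, mul_zero] at hdist
    exact absurd hdist.symm Fintype.card_ne_zero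

theorem card_phiPlus_comp_affine :
    Nat.card {h : G → ZMod 2 //
        ∃ f, IsAffine f ∧ f 0 ∈ ({0, 2} : Set (ZMod 4)) ∧ h = phiPlus ∘ f}
      = 2 * Nat.card (G →+ ZMod 4) := by
  have hpair : Nat.card ({0, 2} : Set (ZMod 4)) = 2 := by
    rw [Nat.card_coe_set_eq, Set.ncard_pair (by decide)]
  calc _ = Nat.card (Set.range fun f : {f : G → ZMod 4 //
          IsAffine f ∧ f 0 ∈ ({0, 2} : Set (ZMod 4))} => phiPlus ∘ f.1) :=
        Nat.card_congr <| Equiv.subtypeEquivRight fun h => by simp [eq_comm, and_assoc]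
    _ = Nat.card {f : G → ZMod 4 // IsAffine f ∧ f 0 ∈ ({0, 2} : Set (ZMod 4))} :=
        Nat.card_range_of_injective phiPlus_comp_injective
    _ = 2 * Nat.card (G →+ ZMod 4) := by
        rw [Nat.card_congr (affineEquiv G _), Nat.card_prod, hpair]

theorem card_le_two_mul_hammingDist_phiPlus (hf : IsAffine f) (hg : IsAffine g)
    (hf0 : f 0 ∈ ({0, 2} : Set (ZMod 4))) (hg0 : g 0 ∈ ({0, 2} : Set (ZMod 4)))
    (hne : phiPlus ∘ f ≠ phiPlus ∘ g) :
    Fintype.card G ≤ 2 * hammingDist (phiPlus ∘ f) (phiPlus ∘ g) := by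
  rcases phiPlus_comp_trichotomy hf hg hf0 hg0 with rfl | hall | hdist
  · exact absurd rfl hne
  · have : hammingDist (phiPlus ∘ f) (phiPlus ∘ g) = Fintype.card G := by
      simp [hammingDist, hall]
    omega
  · exact hdist.ge

theorem exists_two_mul_hammingDist_phiPlus_eq_card (hG : 1 < Nat.card (G →+ ZMod 4)) :
    ∃ h₁ h₂ : G → ZMod 2,
      (∃ f, IsAffine f ∧ f 0 ∈ ({0, 2} : Set (ZMod 4)) ∧ h₁ = phiPlus ∘ f) ∧
      (∃ f, IsAffine f ∧ f 0 ∈ ({0, 2} : Set (ZMod 4)) ∧ h₂ = phiPlus ∘ f) ∧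
      h₁ ≠ h₂ ∧ 2 * hammingDist h₁ h₂ = Fintype.card G := by
  have : Finite (G →+ ZMod 4) := Finite.of_injective _ DFunLike.coe_injective
  have : Nontrivial (G →+ ZMod 4) := Finite.one_lt_card_iff_nontrivial.mp hG
  obtain ⟨φ, hφ⟩ := exists_ne (0 : G →+ ZMod 4)
  have hmem : ∀ ψ : G →+ ZMod 4, ψ 0 ∈ ({0, 2} : Set (ZMod 4)) := fun ψ => by simp
  have hdist : 2 * hammingDist (phiPlus ∘ φ) (phiPlus ∘ (0 : G →+ ZMod 4)) = Fintype.card G := by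
    rcases phiPlus_comp_trichotomy φ.isAffine (AddMonoidHom.isAffine 0) (hmem φ) (hmem 0) with
      h | hall | hdist
    · exact absurd (DFunLike.coe_injective h) hφ
    · exact absurd (by simp) (hall 0)
    · exact hdist
  refine ⟨_, _, ⟨φ, φ.isAffine, hmem φ, rfl⟩, ⟨_, AddMonoidHom.isAffine 0, hmem 0, rfl⟩,
    hammingDist_pos.mp ?_, hdist⟩
  have := Fintype.card_pos (α := G)
  omega

end AffineCode

theorem stmt14 (γ δ : ℕ) :
    Nat.card {h : (Fin γ → ZMod 2) × (Fin δ → ZMod 4) → ZMod 2 //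
        ∃ f, IsAffine f ∧ f 0 ∈ ({0, 2} : Set (ZMod 4)) ∧ h = phiPlus ∘ f}
      = 2 * 2 ^ (γ + 2 * δ) ∧
    (∀ h₁ h₂ : (Fin γ → ZMod 2) × (Fin δ → ZMod 4) → ZMod 2,
      (∃ f, IsAffine f ∧ f 0 ∈ ({0, 2} : Set (ZMod 4)) ∧ h₁ = phiPlus ∘ f) →
      (∃ f, IsAffine f ∧ f 0 ∈ ({0, 2} : Set (ZMod 4)) ∧ h₂ = phiPlus ∘ f) →
      h₁ ≠ h₂ →
      2 ^ (γ + 2 * δ) ≤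
        2 * ∑ v : (Fin γ → ZMod 2) × (Fin δ → ZMod 4), (if h₁ v ≠ h₂ v then 1 else 0)) ∧
    (0 < γ + δ →
      ∃ h₁ h₂ : (Fin γ → ZMod 2) × (Fin δ → ZMod 4) → ZMod 2,
        (∃ f, IsAffine f ∧ f 0 ∈ ({0, 2} : Set (ZMod 4)) ∧ h₁ = phiPlus ∘ f) ∧
        (∃ f, IsAffine f ∧ f 0 ∈ ({0, 2} : Set (ZMod 4)) ∧ h₂ = phiPlus ∘ f) ∧
        h₁ ≠ h₂ ∧
        2 ^ (γ + 2 * δ) =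
          2 * ∑ v : (Fin γ → ZMod 2) × (Fin δ → ZMod 4), (if h₁ v ≠ h₂ v then 1 else 0)) := by
  have hhom := card_addMonoidHom_zmod_two_pi_prod_zmod_four_pi γ δ
  have hcard : Fintype.card ((Fin γ → ZMod 2) × (Fin δ → ZMod 4)) = 2 ^ (γ + 2 * δ) := by
    simp [pow_add, pow_mul]
  refine ⟨by rw [card_phiPlus_comp_affine, hhom], ?_, fun hpos => ?_⟩
  · rintro h₁ h₂ ⟨f, hf, hf0, rfl⟩ ⟨g, hg, hg0, rfl⟩ hne
    rw [← hammingDist_eq_sum_ite, ← hcard]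
    exact card_le_two_mul_hammingDist_phiPlus hf hg hf0 hg0 hne
  · obtain ⟨h₁, h₂, H₁, H₂, hne, hdist⟩ :=
      exists_two_mul_hammingDist_phiPlus_eq_card (hhom ▸ Nat.one_lt_two_pow (by omega))
    exact ⟨h₁, h₂, H₁, H₂, hne, by rw [← hammingDist_eq_sum_ite, hdist, hcard]⟩
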